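/- arXiv:2009.01346 — 2 statements merged into one kernel-verified Lean document; each statement's English description precedes it below -/
import Mathlib

section
/- Let n = p be a prime and ω = e^{2πi/p}. Suppose a_0, …, a_{p−1}, b_0, …, b_{p−1} ∈ {0,1} are such that for every 0 ≤ k ≤ p−1 there exists an integer c_k with Σ_{i=0}^{p−1} a_i ω^{i·k} = ω^{c_k} · Σ_{i=0}^{p−1} b_i ω^{i·k}. Then the sequences (a_i) and (b_i) are cyclic shifts of each other. -/
/-- `primRoot n` is the primitive `n`-th root of unity `e^{2πi/n}`. -/
noncomputable def primRoot (n : ℕ) : ℂ :=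
  Complex.exp (2 * Real.pi * Complex.I / n)

/-- `expSum n a k = Σ_{i=0}^{n-1} a_i ω^{i·k}` where `ω = e^{2πi/n}`. -/
noncomputable def expSum (n : ℕ) (a : ℕ → ℕ) (k : ℕ) : ℂ :=
  ∑ i ∈ Finset.range n, (a i : ℂ) * primRoot n ^ (i * k)

/-! Only the coefficients `k = 0` and `k = 1` are needed. Taking absolute values at `k = 0` shows
that `a` and `b` have the same sum. At `k = 1`, write `ω^c = ω^j` with `0 ≤ j < p`; multiplying by
`ω^j` rotates coefficients, so `dᵢ = bᵢ - a_{(i+j) mod p}` satisfies `∑ dᵢ ωⁱ = 0` and `∑ dᵢ = 0`.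
As `1 + X + ⋯ + X^{p-1}` is the minimal polynomial of `ω` over `ℚ`, the first relation forces all
`dᵢ` to be equal, and the second then forces them to vanish. -/

open Finset Polynomial

theorem Finset.sum_range_comp_add_mod {M : Type*} [AddCommMonoid M] (f : ℕ → M) (n j : ℕ) :
    ∑ i ∈ range n, f ((i + j) % n) = ∑ i ∈ range n, f i := by
  rcases Nat.eq_zero_or_pos n with rfl | hn
  · simp
  have : NeZero n := ⟨hn.ne'⟩
  rw [← Fin.sum_univ_eq_sum_range f, ← Fin.sum_univ_eq_sum_range (fun i => f ((i + j) % n)),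
    ← Equiv.sum_comp (Equiv.addRight (Fin.ofNat n j)) (fun i => f i)]
  simp only [Equiv.coe_addRight, Fin.val_add, Fin.val_ofNat, Nat.add_mod_mod]

theorem sum_comp_add_mod_mul_pow {R : Type*} [CommSemiring R] {ζ : R} {n : ℕ} (hζ : ζ ^ n = 1)
    (g : ℕ → R) (j : ℕ) :
    ζ ^ j * ∑ i ∈ range n, g ((i + j) % n) * ζ ^ i = ∑ i ∈ range n, g i * ζ ^ i := by
  rw [mul_sum, ← sum_range_comp_add_mod (fun i => g i * ζ ^ i) n j]
  refine sum_congr rfl fun i _ => ?_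
  rw [← pow_eq_pow_mod _ hζ, pow_add]
  ring

theorem Polynomial.coeff_sum_range_C_mul_X_pow {R : Type*} [Semiring R] (f : ℕ → R) (n k : ℕ) :
    (∑ i ∈ range n, C (f i) * X ^ i).coeff k = if k < n then f k else 0 := by
  simp only [finsetSum_coeff, coeff_C_mul, coeff_X_pow, mul_ite, mul_one, mul_zero,
    sum_ite_eq, mem_range]

theorem IsPrimitiveRoot.coeff_eq_of_sum_mul_pow_eq_zero {K : Type*} [Field K] [CharZero K]
    {p : ℕ} (hp : p.Prime) {ζ : K} (hζ : IsPrimitiveRoot ζ p) {f : ℕ → ℚ}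
    (h : ∑ i ∈ range p, (f i : K) * ζ ^ i = 0) {i : ℕ} (hi : i < p) : f i = f 0 := by
  have : Fact p.Prime := ⟨hp⟩
  set P : ℚ[X] := ∑ i ∈ range p, C (f i) * X ^ i
  have hPζ : aeval ζ P = 0 := by simpa [P, map_sum] using h
  have hmonic : (cyclotomic p ℚ).Monic := cyclotomic.monic p ℚ
  have hdvd : cyclotomic p ℚ ∣ P := by
    rw [cyclotomic_eq_minpoly_rat hζ hp.pos]
    exact minpoly.dvd ℚ ζ hPζ
  have hQ : (P /ₘ cyclotomic p ℚ).natDegree = 0 := by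
    have hP : P.natDegree ≤ p - 1 := natDegree_le_iff_coeff_eq_zero.mpr fun k hk => by
      rw [coeff_sum_range_C_mul_X_pow, if_neg (by omega)]
    rw [natDegree_divByMonic _ hmonic, natDegree_cyclotomic, Nat.totient_prime hp]
    omega
  obtain ⟨c, hPc⟩ : ∃ c, P = cyclotomic p ℚ * C c := by
    refine ⟨(P /ₘ cyclotomic p ℚ).coeff 0, ?_⟩
    rw [← eq_C_of_natDegree_eq_zero hQ]
    simpa [(modByMonic_eq_zero_iff_dvd hmonic).2 hdvd] using
      (modByMonic_add_div P (cyclotomic p ℚ)).symm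
  have hcoeff : ∀ k < p, f k = c := fun k hk => by
    simpa [P, coeff_sum_range_C_mul_X_pow, cyclotomic_prime, finsetSum_coeff, coeff_X_pow, hk]
      using congrArg (coeff · k) hPc
  rw [hcoeff i hi, hcoeff 0 hp.pos]

theorem IsPrimitiveRoot.eq_zero_of_sum_mul_pow_eq_zero {K : Type*} [Field K] [CharZero K]
    {p : ℕ} (hp : p.Prime) {ζ : K} (hζ : IsPrimitiveRoot ζ p) {f : ℕ → ℚ}
    (h : ∑ i ∈ range p, (f i : K) * ζ ^ i = 0) (hsum : ∑ i ∈ range p, f i = 0) {i : ℕ}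
    (hi : i < p) : f i = 0 := by
  have hconst : ∑ i ∈ range p, f i = p * f 0 := by
    rw [sum_congr rfl fun k hk => hζ.coeff_eq_of_sum_mul_pow_eq_zero hp h (mem_range.1 hk)]
    simp
  rw [hζ.coeff_eq_of_sum_mul_pow_eq_zero hp h hi]
  simpa [hconst, hp.ne_zero] using hsum

theorem norm_primRoot (n : ℕ) : ‖primRoot n‖ = 1 := by
  simp [primRoot, Complex.norm_exp]

theorem expSum_zero (n : ℕ) (a : ℕ → ℕ) : expSum n a 0 = ∑ i ∈ range n, (a i : ℂ) := by
  simp [expSum]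

theorem expSum_one (n : ℕ) (a : ℕ → ℕ) :
    expSum n a 1 = ∑ i ∈ range n, (a i : ℂ) * primRoot n ^ i := by
  simp [expSum]

theorem sum_eq_sum_of_expSum_zero_eq {n : ℕ} {a b : ℕ → ℕ} {c : ℤ}
    (h : expSum n a 0 = primRoot n ^ c * expSum n b 0) :
    ∑ i ∈ range n, a i = ∑ i ∈ range n, b i := by
  have := congrArg norm h
  rw [norm_mul, norm_zpow, norm_primRoot, one_zpow, one_mul, expSum_zero, expSum_zero] at this
  exact_mod_cast this

theorem stmt_2_general (p : ℕ) (hp : p.Prime)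
    (a b : ℕ → ℕ)
    (h : ∀ k < p, ∃ c : ℤ, expSum p a k = primRoot p ^ c * expSum p b k) :
    ∃ j : ℕ, ∀ i < p, b i = a ((i + j) % p) := by
  have hζ : IsPrimitiveRoot (primRoot p) p := Complex.isPrimitiveRoot_exp p hp.ne_zero
  have : NeZero p := ⟨hp.ne_zero⟩
  obtain ⟨c₀, hc₀⟩ := h 0 hp.pos
  obtain ⟨c₁, hc₁⟩ := h 1 hp.one_lt
  obtain ⟨j, -, hj⟩ := hζ.eq_pow_of_pow_eq_one (ξ := primRoot p ^ c₁) <| by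
    rw [← zpow_natCast, ← zpow_mul, mul_comm, zpow_mul, zpow_natCast, hζ.pow_eq_one, one_zpow]
  have hshift : ∑ i ∈ range p, (a ((i + j) % p) : ℂ) * primRoot p ^ i = expSum p b 1 := by
    apply mul_left_cancel₀ (pow_ne_zero j (hζ.ne_zero hp.ne_zero))
    rw [sum_comp_add_mod_mul_pow hζ.pow_eq_one (fun i => (a i : ℂ)), ← expSum_one, hc₁, hj]
  refine ⟨j, fun i hi => ?_⟩
  have hd := hζ.eq_zero_of_sum_mul_pow_eq_zero hp (f := fun i => (b i : ℚ) - a ((i + j) % p))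
    ?_ ?_ hi
  · exact_mod_cast sub_eq_zero.1 hd
  · push_cast
    simp only [sub_mul, sum_sub_distrib, hshift, expSum_one, sub_self]
  · rw [sum_sub_distrib, sum_range_comp_add_mod (fun i => (a i : ℚ)), sub_eq_zero]
    exact_mod_cast (sum_eq_sum_of_expSum_zero_eq hc₀).symm

theorem stmt_2 (p : ℕ) (hp : p.Prime)
    (a b : ℕ → ℕ)
    (ha : ∀ i < p, a i = 0 ∨ a i = 1) (hb : ∀ i < p, b i = 0 ∨ b i = 1)
    (h : ∀ k < p, ∃ c : ℤ, expSum p a k = primRoot p ^ c * expSum p b k) :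
    ∃ j : ℕ, ∀ i < p, b i = a ((i + j) % p) :=
  stmt_2_general p hp a b h
end

section
/- Let n = abc where a, b, c are integers greater than 1, and let ω = e^{2πi/n}. Define the sets A = {1 + ℓa : 0 ≤ ℓ ≤ b−1} ∪ {a + ℓab : 0 ≤ ℓ ≤ c−1} and B = {1 + ℓa : 0 ≤ ℓ ≤ b−1} ∪ {ℓab : 0 ≤ ℓ ≤ c−1}, and the polynomials P(x) = Σ_{i∈A} x^i and Q(x) = Σ_{i∈B} x^i in ℤ[x]. Then: (i) P(x) − Q(x) = (x^a − 1)·(x^{abc} − 1)/(x^{ab} − 1) and P(x) − x^a·Q(x) = x(1 − x^{ab}) as polynomial identities in ℤ[x]; (ii) for every 0 ≤ k ≤ n−1 there exists an integer c_k with P(ω^k) = ω^{c_k}·Q(ω^k); (iii) the binary sequences (a_i)_{i=0}^{n−1} and (b_i)_{i=0}^{n−1} defined by a_i = 1 iff i ∈ A and b_i = 1 iff i ∈ B are not cyclic shifts of each other. -/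
open Polynomial

/-- The set `A = {1 + ℓa : 0 ≤ ℓ ≤ b−1} ∪ {a + ℓab : 0 ≤ ℓ ≤ c−1}`. -/
def setA (a b c : ℕ) : Finset ℕ :=
  ((Finset.range b).image fun ℓ => 1 + ℓ * a) ∪
    ((Finset.range c).image fun ℓ => a + ℓ * (a * b))

/-- The set `B = {1 + ℓa : 0 ≤ ℓ ≤ b−1} ∪ {ℓab : 0 ≤ ℓ ≤ c−1}`. -/
def setB (a b c : ℕ) : Finset ℕ :=
  ((Finset.range b).image fun ℓ => 1 + ℓ * a) ∪
    ((Finset.range c).image fun ℓ => ℓ * (a * b))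

/-- `polyOf S = Σ_{i ∈ S} x^i ∈ ℤ[x]`. -/
noncomputable def polyOf (S : Finset ℕ) : Polynomial ℤ :=
  ∑ i ∈ S, Polynomial.X ^ i

/-!
Both sets contain the progression `1 + ℓa`; the other progression of `A` is that of `B`
translated by `a`, and `A` is `B + a` with `1 + ab` replaced by `1`. This gives the two
identities. At an `n`-th root of unity `z`, either `z^(ab) = 1`, and the second identity gives
`P(z) = z^a Q(z)`, or the geometric sum `∑ z^(abℓ)` vanishes, and the first gives `P(z) = Q(z)`.

For the shifts: a translation `j` carrying `B` onto `A` modulo `n` sends `0` and `ab` to two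
distinct elements of `A` that are congruent modulo `ab`. Only the elements `a + ℓab` have this
property, so `j = a + ℓab`; since `1 ∈ B`, also `j + 1 ∈ A`, which forces `j = a`. But then
`1 + (b - 1)a ∈ B` is sent to `1 + ab ∉ A`.
-/

open Finset

section

variable {a b c : ℕ}

theorem mem_setA {x : ℕ} :
    x ∈ setA a b c ↔ (∃ ℓ < b, 1 + ℓ * a = x) ∨ ∃ ℓ < c, a + ℓ * (a * b) = x := by
  simp [setA]

theorem one_add_mul_mem_setB {ℓ : ℕ} (hℓ : ℓ < b) : 1 + ℓ * a ∈ setB a b c :=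
  mem_union_left _ (mem_image_of_mem _ (mem_range.2 hℓ))

theorem mul_mem_setB {ℓ : ℕ} (hℓ : ℓ < c) : ℓ * (a * b) ∈ setB a b c :=
  mem_union_right _ (mem_image_of_mem (fun ℓ => ℓ * (a * b)) (mem_range.2 hℓ))

theorem one_add_mul_ne_mul (ha : 1 < a) (x y : ℕ) : 1 + x * a ≠ y * a := by
  intro h
  have := congrArg (· % a) h
  simp [Nat.mod_eq_of_lt ha] at this

theorem one_add_mul_lt_mul (ha : 1 < a) {ℓ : ℕ} (hℓ : ℓ < b) : 1 + ℓ * a < a * b := by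
  nlinarith

theorem polyOf_setA (ha : 1 < a) (hb : b ≠ 0) :
    polyOf (setA a b c) =
      X * ∑ ℓ ∈ range b, (X ^ a) ^ ℓ + X ^ a * ∑ ℓ ∈ range c, (X ^ (a * b)) ^ ℓ := by
  have hdisj : Disjoint ((range b).image fun ℓ => 1 + ℓ * a)
      ((range c).image fun ℓ => a + ℓ * (a * b)) := by
    simp only [disjoint_left, mem_image]
    rintro _ ⟨ℓ, -, rfl⟩ ⟨m, -, h⟩
    exact one_add_mul_ne_mul ha ℓ (1 + m * b) (by rw [← h]; ring)
  rw [polyOf, setA, sum_union hdisj, sum_image, sum_image, mul_sum, mul_sum]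
  · congr 1 <;> exact sum_congr rfl fun ℓ _ => by ring
  all_goals
    intro x _ y _ h
    simpa [hb, show a ≠ 0 by omega] using h

theorem polyOf_setB (ha : 1 < a) (hb : b ≠ 0) :
    polyOf (setB a b c) =
      X * ∑ ℓ ∈ range b, (X ^ a) ^ ℓ + ∑ ℓ ∈ range c, (X ^ (a * b)) ^ ℓ := by
  have hdisj : Disjoint ((range b).image fun ℓ => 1 + ℓ * a)
      ((range c).image fun ℓ => ℓ * (a * b)) := by
    simp only [disjoint_left, mem_image]
    rintro _ ⟨ℓ, -, rfl⟩ ⟨m, -, h⟩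
    exact one_add_mul_ne_mul ha ℓ (m * b) (by rw [← h]; ring)
  rw [polyOf, setB, sum_union hdisj, sum_image, sum_image, mul_sum]
  · congr 1 <;> exact sum_congr rfl fun ℓ _ => by ring
  all_goals
    intro x _ y _ h
    simpa [hb, show a ≠ 0 by omega] using h

theorem polyOf_setA_sub_polyOf_setB (ha : 1 < a) (hb : b ≠ 0) :
    polyOf (setA a b c) - polyOf (setB a b c) =
      (X ^ a - 1) * ∑ ℓ ∈ range c, (X : ℤ[X]) ^ (a * b * ℓ) := by
  simp only [polyOf_setA ha hb, polyOf_setB ha hb, pow_mul]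
  ring

theorem polyOf_setA_sub_X_pow_mul_polyOf_setB (ha : 1 < a) (hb : b ≠ 0) :
    polyOf (setA a b c) - X ^ a * polyOf (setB a b c) = X * (1 - X ^ (a * b)) := by
  rw [polyOf_setA ha hb, polyOf_setB ha hb, pow_mul, ← mul_neg_geom_sum]
  ring

theorem exists_aeval_polyOf_setA_eq_pow_mul {R : Type*} [CommRing R] [IsDomain R]
    (ha : 1 < a) (hb : b ≠ 0) {z : R} (hz : z ^ (a * b * c) = 1) :
    ∃ m : ℕ, aeval z (polyOf (setA a b c)) = z ^ m * aeval z (polyOf (setB a b c)) := by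
  have h₁ := congrArg (aeval z) (polyOf_setA_sub_polyOf_setB (c := c) ha hb)
  have h₂ := congrArg (aeval z) (polyOf_setA_sub_X_pow_mul_polyOf_setB (c := c) ha hb)
  simp only [map_sub, map_mul, map_pow, map_one, map_sum, aeval_X, pow_mul] at h₁ h₂ hz
  by_cases hab : (z ^ a) ^ b = 1
  · exact ⟨a, by linear_combination h₂ - z * hab⟩
  · refine ⟨0, ?_⟩
    have hgeom : ∑ ℓ ∈ range c, ((z ^ a) ^ b) ^ ℓ = 0 := by
      have := mul_geom_sum ((z ^ a) ^ b) c
      rw [hz, sub_self] at this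
      exact (mul_eq_zero.1 this).resolve_left (sub_ne_zero.2 hab)
    linear_combination h₁ + (z ^ a - 1) * hgeom

theorem exists_eq_add_mul_of_mem_setA_of_mod_eq (ha : 1 < a) (hb : 1 < b) {x y : ℕ}
    (hx : x ∈ setA a b c) (hy : y ∈ setA a b c) (hne : x ≠ y) (hxy : x % (a * b) = y % (a * b)) :
    ∃ ℓ < c, a + ℓ * (a * b) = x := by
  rcases mem_setA.1 hx with ⟨ℓ, hℓ, rfl⟩ | h
  · exfalso
    rw [Nat.mod_eq_of_lt (one_add_mul_lt_mul ha hℓ)] at hxy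
    rcases mem_setA.1 hy with ⟨m, hm, rfl⟩ | ⟨m, -, rfl⟩
    · exact hne (hxy.trans (Nat.mod_eq_of_lt (one_add_mul_lt_mul ha hm)))
    · rw [Nat.add_mul_mod_self_right,
        Nat.mod_eq_of_lt (lt_mul_of_one_lt_right (by omega) hb)] at hxy
      exact one_add_mul_ne_mul ha ℓ 1 (by rw [hxy, one_mul])
  · exact h

theorem eq_zero_of_add_mul_add_one_mem_setA (ha : 1 < a) {ℓ : ℕ}
    (h : a + ℓ * (a * b) + 1 ∈ setA a b c) : ℓ = 0 := by
  rcases mem_setA.1 h with ⟨m, hm, he⟩ | ⟨m, -, he⟩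
  · have hm' : m = 1 + ℓ * b := Nat.eq_of_mul_eq_mul_right (show 0 < a by omega)
      (show m * a = (1 + ℓ * b) * a by linarith)
    by_contra hℓ
    have : b ≤ ℓ * b := Nat.le_mul_of_pos_left b (Nat.pos_of_ne_zero hℓ)
    omega
  · exact absurd (by linarith) (one_add_mul_ne_mul ha (1 + ℓ * b) (1 + m * b))

theorem one_add_mul_not_mem_setA (ha : 1 < a) : 1 + b * a ∉ setA a b c := by
  intro h
  rcases mem_setA.1 h with ⟨m, hm, he⟩ | ⟨m, -, he⟩
  · have : m = b := Nat.eq_of_mul_eq_mul_right (show 0 < a by omega) (by omega)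
    omega
  · exact one_add_mul_ne_mul ha b (1 + m * b) (by linarith)

theorem not_forall_mem_setB_iff_add_mod_mem_setA (ha : 1 < a) (hb : 1 < b) (hc : 1 < c)
    {j : ℕ} (hj : j < a * b * c) :
    ¬ ∀ i < a * b * c, (i ∈ setB a b c ↔ (i + j) % (a * b * c) ∈ setA a b c) := by
  intro h
  have hab : a * 2 ≤ a * b := Nat.mul_le_mul_left a hb
  have habc : a * b * 2 ≤ a * b * c := Nat.mul_le_mul_left _ hc
  have hjA : j ∈ setA a b c := by
    have := (h (0 * (a * b)) (by omega)).1 (mul_mem_setB (by omega))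
    rwa [zero_mul, zero_add, Nat.mod_eq_of_lt hj] at this
  have hjA' := (h (1 * (a * b)) (by omega)).1 (mul_mem_setB hc)
  have hne : j ≠ (1 * (a * b) + j) % (a * b * c) := by
    intro heq
    rcases lt_or_ge (1 * (a * b) + j) (a * b * c) with hlt | hge
    · rw [Nat.mod_eq_of_lt hlt] at heq
      omega
    · rw [Nat.mod_eq_sub_mod hge, Nat.mod_eq_of_lt (by omega)] at heq
      omega
  have hmod : j % (a * b) = (1 * (a * b) + j) % (a * b * c) % (a * b) := by
    rw [Nat.mod_mod_of_dvd _ (Dvd.intro c rfl), one_mul, Nat.add_mod_left]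
  obtain ⟨ℓ, hℓ, rfl⟩ := exists_eq_add_mul_of_mem_setA_of_mod_eq ha hb hjA hjA' hne hmod
  have hℓ0 : ℓ = 0 := by
    have := (h (1 + 0 * a) (by omega)).1 (one_add_mul_mem_setB (by omega))
    have hlt : a + ℓ * (a * b) + 1 < a * b * c := by
      nlinarith [Nat.mul_le_mul_right (a * b) hℓ]
    rw [show 1 + 0 * a + (a + ℓ * (a * b)) = a + ℓ * (a * b) + 1 by ring,
      Nat.mod_eq_of_lt hlt] at this
    exact eq_zero_of_add_mul_add_one_mem_setA ha this
  subst hℓ0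
  obtain ⟨b', rfl⟩ : ∃ b', b = b' + 1 := ⟨b - 1, by omega⟩
  have := (h (1 + b' * a) (by nlinarith)).1 (one_add_mul_mem_setB (by omega))
  rw [show 1 + b' * a + (a + 0 * (a * (b' + 1))) = 1 + (b' + 1) * a by ring,
    Nat.mod_eq_of_lt (by nlinarith)] at this
  exact one_add_mul_not_mem_setA ha this

end

theorem stmt_7 (a b c : ℕ) (ha : 1 < a) (hb : 1 < b) (hc : 1 < c) :
    -- (i) polynomial identities in ℤ[x]
    (polyOf (setA a b c) - polyOf (setB a b c) =
        (Polynomial.X ^ a - 1) * ∑ ℓ ∈ Finset.range c, (Polynomial.X : Polynomial ℤ) ^ (a * b * ℓ)) ∧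
    (polyOf (setA a b c) - Polynomial.X ^ a * polyOf (setB a b c) =
        Polynomial.X * (1 - Polynomial.X ^ (a * b))) ∧
    -- (ii) evaluations at n-th roots of unity agree up to a power of ω
    (∀ k < a * b * c, ∃ ck : ℤ,
      Polynomial.aeval (primRoot (a * b * c) ^ k) (polyOf (setA a b c)) =
        primRoot (a * b * c) ^ ck *
          Polynomial.aeval (primRoot (a * b * c) ^ k) (polyOf (setB a b c))) ∧
    -- (iii) the associated binary sequences are not cyclic shifts of each other
    ¬ ∃ j : ℕ, ∀ i < a * b * c,
        (if i ∈ setB a b c then 1 else 0 : ℕ) =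
          (if (i + j) % (a * b * c) ∈ setA a b c then 1 else 0) := by
  have hn : a * b * c ≠ 0 := by positivity
  refine ⟨polyOf_setA_sub_polyOf_setB ha (by omega),
    polyOf_setA_sub_X_pow_mul_polyOf_setB ha (by omega), fun k _ => ?_, ?_⟩
  · have hω : IsPrimitiveRoot (primRoot (a * b * c)) (a * b * c) :=
      Complex.isPrimitiveRoot_exp _ hn
    obtain ⟨m, hm⟩ := exists_aeval_polyOf_setA_eq_pow_mul (b := b) (c := c) ha (by omega)
      (z := primRoot (a * b * c) ^ k) (by rw [← pow_mul, mul_comm k, pow_mul, hω.pow_eq_one, one_pow])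
    exact ⟨(k * m : ℕ), by rwa [zpow_natCast, pow_mul]⟩
  · rintro ⟨j, hj⟩
    refine not_forall_mem_setB_iff_add_mod_mem_setA ha hb hc (Nat.mod_lt j (by omega))
      fun i hi => ?_
    have := hj i hi
    rw [Nat.add_mod_mod]
    split_ifs at this <;> simp_all
end
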